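/- The function η(q) := (q²K(q) − K(q) + E(q))/√(2q² − 1) is strictly decreasing on (1/√2, q*), where q* is the unique zero of 2E − K; indeed η'(q) = −q(2E(q) − K(q))/(2q²−1)^{3/2} < 0 on that interval. -/

import Mathlib

open Real Set Filter

noncomputable def Kc (q : ℝ) : ℝ := ∫ θ in (0:ℝ)..(π/2), 1 / Real.sqrt (1 - q^2 * Real.sin θ^2)

noncomputable def Ec (q : ℝ) : ℝ := ∫ θ in (0:ℝ)..(π/2), Real.sqrt (1 - q^2 * Real.sin θ^2)

noncomputable def fc (q : ℝ) : ℝ := (4*q^4 - 5*q^2 + 1) * Kc q + (-8*q^4 + 8*q^2 - 1) * Ec q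


noncomputable def etac (q : ℝ) : ℝ := (q^2 * Kc q - Kc q + Ec q) / Real.sqrt (2*q^2 - 1)

/-!
Differentiating under the integral sign gives Legendre's formulas `E' = (E - K) / q` and
`K' = (E / (1 - q²) - K) / q`, the latter through `∫ (1 - q² sin² θ)^(-3/2) = E / (1 - q²)`,
which is the fundamental theorem of calculus for `q² sin θ cos θ / √(1 - q² sin² θ)`.
Hence the numerator of `η` has derivative `q K`, and the quotient rule gives the formula for `η'`.
For its sign: `2E - K` has derivative `((1 - 2q²) E - (1 - q²) K) / (q (1 - q²)) < 0` on
`(1/√2, 1)`, so it is positive to the left of its zero `q*`.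
-/

open MeasureTheory Topology

lemma one_sub_sq_mul_sin_sq_pos {x : ℝ} (hx : x ^ 2 < 1) (θ : ℝ) :
    0 < 1 - x ^ 2 * sin θ ^ 2 := by
  nlinarith [sin_sq_le_one θ, sq_nonneg x, sq_nonneg (sin θ)]

lemma one_sub_sq_mul_sin_sq_mem_Icc {x ρ : ℝ} (hx : x ^ 2 ≤ ρ) (θ : ℝ) :
    1 - x ^ 2 * sin θ ^ 2 ∈ Icc (1 - ρ) 1 := by
  constructor <;> nlinarith [sin_sq_le_one θ, sq_nonneg x, sq_nonneg (sin θ)]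

lemma continuous_comp_one_sub_sq_mul_sin_sq {g : ℝ → ℝ} (hg : ContinuousOn g (Ioi 0))
    {x : ℝ} (hx : x ^ 2 < 1) : Continuous fun θ => g (1 - x ^ 2 * sin θ ^ 2) :=
  hg.comp_continuous (by fun_prop) (one_sub_sq_mul_sin_sq_pos hx)

lemma intervalIntegrable_comp_one_sub_sq_mul_sin_sq {g : ℝ → ℝ} (hg : ContinuousOn g (Ioi 0))
    {x : ℝ} (hx : x ^ 2 < 1) (a b : ℝ) :
    IntervalIntegrable (fun θ => g (1 - x ^ 2 * sin θ ^ 2)) volume a b :=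
  (continuous_comp_one_sub_sq_mul_sin_sq hg hx).intervalIntegrable a b

/-- Differentiation under the integral sign: on `y ^ 2 ≤ ρ < 1` the radicand stays in the compact
`[1 - ρ, 1] ⊂ (0, ∞)`, where `g'` is bounded. -/
lemma hasDerivAt_integral_comp_one_sub_sq_mul_sin_sq {g g' : ℝ → ℝ}
    (hg : ∀ t, 0 < t → HasDerivAt g (g' t) t) (hg' : ContinuousOn g' (Ioi 0))
    {x : ℝ} (hx : x ^ 2 < 1) (a b : ℝ) :
    HasDerivAt (fun y => ∫ θ in a..b, g (1 - y ^ 2 * sin θ ^ 2))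
      (∫ θ in a..b, g' (1 - x ^ 2 * sin θ ^ 2) * -(2 * x * sin θ ^ 2)) x := by
  have hgc : ContinuousOn g (Ioi 0) := fun t ht => (hg t ht).continuousAt.continuousWithinAt
  set ρ := (1 + x ^ 2) / 2 with hρ_def
  have hρ : 0 < 1 - ρ := by linarith
  have hnhds : {y : ℝ | y ^ 2 < ρ} ∈ 𝓝 x :=
    (isOpen_lt (continuous_pow 2) continuous_const).mem_nhds (show x ^ 2 < ρ by linarith)
  obtain ⟨C, hC⟩ := isCompact_Icc.exists_bound_of_continuousOn
    (hg'.mono fun t (ht : t ∈ Icc (1 - ρ) 1) => hρ.trans_le ht.1)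
  refine (intervalIntegral.hasDerivAt_integral_of_dominated_loc_of_deriv_le
    (bound := fun _ => C * 2)
    (F' := fun y θ => g' (1 - y ^ 2 * sin θ ^ 2) * -(2 * y * sin θ ^ 2))
    hnhds ?_ (intervalIntegrable_comp_one_sub_sq_mul_sin_sq hgc hx a b)
    ((continuous_comp_one_sub_sq_mul_sin_sq hg' hx).fun_mul
      (show Continuous fun θ => -(2 * x * sin θ ^ 2) by fun_prop)).aestronglyMeasurable
    ?_ intervalIntegrable_const ?_).2
  · filter_upwards [hnhds] with y hy
    exact (continuous_comp_one_sub_sq_mul_sin_sq hgc (by linarith [hy])).aestronglyMeasurable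
  · filter_upwards with θ _ y hy
    have hy1 : |y| ≤ 1 := abs_le_one_iff_mul_self_le_one.2 (by nlinarith [hy])
    have hg'C := hC _ (one_sub_sq_mul_sin_sq_mem_Icc hy.le θ)
    have h2 : ‖-(2 * y * sin θ ^ 2)‖ ≤ 2 := by
      rw [norm_neg, Real.norm_eq_abs, abs_mul, abs_mul, abs_two, abs_of_nonneg (sq_nonneg (sin θ))]
      nlinarith [sin_sq_le_one θ, abs_nonneg y, sq_nonneg (sin θ)]
    rw [norm_mul]
    exact mul_le_mul hg'C h2 (norm_nonneg _) ((norm_nonneg _).trans hg'C)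
  · filter_upwards with θ _ y hy
    have hpos := one_sub_sq_mul_sin_sq_pos (by linarith [hy] : y ^ 2 < 1) θ
    have hradicand : HasDerivAt (fun y => 1 - y ^ 2 * sin θ ^ 2) (-(2 * y * sin θ ^ 2)) y :=
      (((hasDerivAt_pow 2 y).mul_const (sin θ ^ 2)).const_sub 1).congr_deriv (by norm_num)
    exact (hg _ hpos).comp y hradicand

lemma continuousOn_one_div_sqrt_pow (n : ℕ) :
    ContinuousOn (fun t : ℝ => 1 / √t ^ n) (Ioi 0) :=
  continuousOn_const.div (continuous_sqrt.pow n).continuousOn fun _ ht =>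
    pow_ne_zero n (sqrt_pos.2 ht).ne'

lemma continuousOn_one_div_sqrt : ContinuousOn (fun t : ℝ => 1 / √t) (Ioi 0) := by
  simpa only [pow_one] using continuousOn_one_div_sqrt_pow 1

lemma hasDerivAt_one_div_sqrt {t : ℝ} (ht : 0 < t) :
    HasDerivAt (fun t => 1 / √t) (-(1 / (2 * √t ^ 3))) t := by
  have hs : √t ≠ 0 := (sqrt_pos.2 ht).ne'
  exact ((hasDerivAt_const t 1).div (hasDerivAt_sqrt ht.ne') hs).congr_deriv (by field_simp; ring)

lemma hasDerivAt_mul_sin_mul_cos_div_sqrt {x : ℝ} (hx : x ^ 2 < 1) (θ : ℝ) :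
    HasDerivAt (fun t => x ^ 2 * sin t * cos t / √(1 - x ^ 2 * sin t ^ 2))
      (√(1 - x ^ 2 * sin θ ^ 2) - (1 - x ^ 2) * (1 / √(1 - x ^ 2 * sin θ ^ 2) ^ 3)) θ := by
  have hΔ := one_sub_sq_mul_sin_sq_pos hx θ
  have hu : √(1 - x ^ 2 * sin θ ^ 2) ^ 2 = 1 - x ^ 2 * sin θ ^ 2 := sq_sqrt hΔ.le
  have hnum := ((hasDerivAt_sin θ).const_mul (x ^ 2)).mul (hasDerivAt_cos θ)
  have hden := ((((hasDerivAt_sin θ).pow 2).const_mul (x ^ 2)).const_sub 1).sqrt hΔ.ne'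
  refine (hnum.div hden (sqrt_pos.2 hΔ).ne').congr_deriv ?_
  simp only [Pi.mul_apply, Pi.pow_apply]
  field_simp
  norm_num
  linear_combination
    (2 * x ^ 2 * (cos θ ^ 2 - sin θ ^ 2) - 2 * (√(1 - x ^ 2 * sin θ ^ 2) ^ 2
      + (1 - x ^ 2 * sin θ ^ 2))) * hu
    + (2 * x ^ 2 * (1 - x ^ 2 * sin θ ^ 2) + 2 * x ^ 4 * sin θ ^ 2) * cos_sq' θ

lemma integral_one_div_sqrt_pow_three {x : ℝ} (hx : x ^ 2 < 1) :
    ∫ θ in (0:ℝ)..(π/2), 1 / √(1 - x ^ 2 * sin θ ^ 2) ^ 3 = Ec x / (1 - x ^ 2) := by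
  have hE := intervalIntegrable_comp_one_sub_sq_mul_sin_sq continuous_sqrt.continuousOn hx 0 (π/2)
  have h3 := intervalIntegrable_comp_one_sub_sq_mul_sin_sq (continuousOn_one_div_sqrt_pow 3) hx
    0 (π/2)
  have hftc := intervalIntegral.integral_eq_sub_of_hasDerivAt
    (fun θ _ => hasDerivAt_mul_sin_mul_cos_div_sqrt hx θ) (hE.sub (h3.const_mul (1 - x ^ 2)))
  rw [intervalIntegral.integral_sub hE (h3.const_mul _), intervalIntegral.integral_const_mul]
    at hftc
  simp only [sin_zero, cos_pi_div_two, mul_zero, zero_mul, zero_div, sub_zero] at hftc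
  rw [eq_div_iff (by linarith), Ec]
  linarith

lemma hasDerivAt_Ec {x : ℝ} (hx0 : x ≠ 0) (hx : x ^ 2 < 1) :
    HasDerivAt Ec ((Ec x - Kc x) / x) x := by
  have h := hasDerivAt_integral_comp_one_sub_sq_mul_sin_sq (g' := fun t => 1 / (2 * √t))
    (fun t ht => hasDerivAt_sqrt ht.ne')
    (continuousOn_const.div (continuous_const.mul continuous_sqrt).continuousOn
      fun t ht => mul_ne_zero two_ne_zero (sqrt_pos.2 ht).ne') hx 0 (π/2)
  refine h.congr_deriv ?_
  have hE := intervalIntegrable_comp_one_sub_sq_mul_sin_sq continuous_sqrt.continuousOn hx 0 (π/2)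
  have hK := intervalIntegrable_comp_one_sub_sq_mul_sin_sq continuousOn_one_div_sqrt hx 0 (π/2)
  rw [Ec, Kc, ← intervalIntegral.integral_sub hE hK, ← intervalIntegral.integral_div]
  refine intervalIntegral.integral_congr fun θ _ => ?_
  have hu := sq_sqrt (one_sub_sq_mul_sin_sq_pos hx θ).le
  have hs := (sqrt_pos.2 (one_sub_sq_mul_sin_sq_pos hx θ)).ne'
  field_simp
  linear_combination -hu

lemma hasDerivAt_Kc {x : ℝ} (hx0 : x ≠ 0) (hx : x ^ 2 < 1) :
    HasDerivAt Kc ((Ec x / (1 - x ^ 2) - Kc x) / x) x := by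
  have h := hasDerivAt_integral_comp_one_sub_sq_mul_sin_sq (fun t ht => hasDerivAt_one_div_sqrt ht)
    (continuousOn_const.div (continuous_const.mul (continuous_sqrt.pow 3)).continuousOn
      fun t ht => mul_ne_zero two_ne_zero (pow_ne_zero 3 (sqrt_pos.2 ht).ne')).neg hx 0 (π/2)
  refine h.congr_deriv ?_
  have h3 := intervalIntegrable_comp_one_sub_sq_mul_sin_sq (continuousOn_one_div_sqrt_pow 3) hx
    0 (π/2)
  have hK := intervalIntegrable_comp_one_sub_sq_mul_sin_sq continuousOn_one_div_sqrt hx 0 (π/2)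
  rw [← integral_one_div_sqrt_pow_three hx, Kc, ← intervalIntegral.integral_sub h3 hK,
    ← intervalIntegral.integral_div]
  refine intervalIntegral.integral_congr fun θ _ => ?_
  have hu := sq_sqrt (one_sub_sq_mul_sin_sq_pos hx θ).le
  have hs := (sqrt_pos.2 (one_sub_sq_mul_sin_sq_pos hx θ)).ne'
  field_simp
  linear_combination hu

lemma Ec_pos {x : ℝ} (hx : x ^ 2 < 1) : 0 < Ec x :=
  intervalIntegral.intervalIntegral_pos_of_pos_on
    (intervalIntegrable_comp_one_sub_sq_mul_sin_sq continuous_sqrt.continuousOn hx 0 (π/2))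
    (fun θ _ => sqrt_pos.2 (one_sub_sq_mul_sin_sq_pos hx θ)) (by positivity)

lemma Kc_pos {x : ℝ} (hx : x ^ 2 < 1) : 0 < Kc x :=
  intervalIntegral.intervalIntegral_pos_of_pos_on
    (intervalIntegrable_comp_one_sub_sq_mul_sin_sq continuousOn_one_div_sqrt hx 0 (π/2))
    (fun θ _ => one_div_pos.2 (sqrt_pos.2 (one_sub_sq_mul_sin_sq_pos hx θ))) (by positivity)

lemma hasDerivAt_two_mul_Ec_sub_Kc {x : ℝ} (hx0 : x ≠ 0) (hx : x ^ 2 < 1) :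
    HasDerivAt (fun t => 2 * Ec t - Kc t)
      (((1 - 2 * x ^ 2) * Ec x - (1 - x ^ 2) * Kc x) / (x * (1 - x ^ 2))) x := by
  refine (((hasDerivAt_Ec hx0 hx).const_mul 2).sub (hasDerivAt_Kc hx0 hx)).congr_deriv ?_
  have : 1 - x ^ 2 ≠ 0 := by linarith
  field_simp
  ring

lemma strictAntiOn_Ioo_of_hasDerivAt_neg {f f' : ℝ → ℝ} {a b : ℝ}
    (hf : ∀ x ∈ Ioo a b, HasDerivAt f (f' x) x) (hf' : ∀ x ∈ Ioo a b, f' x < 0) :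
    StrictAntiOn f (Ioo a b) :=
  strictAntiOn_of_hasDerivWithinAt_neg (convex_Ioo a b)
    (fun x hx => (hf x hx).continuousAt.continuousWithinAt)
    (fun x hx => by rw [interior_Ioo] at hx ⊢; exact (hf x hx).hasDerivWithinAt)
    (fun x hx => by rw [interior_Ioo] at hx; exact hf' x hx)

lemma pos_and_sq_mem_Ioo_of_mem_Ioo {x : ℝ} (hx : x ∈ Ioo (1 / √2) 1) :
    0 < x ∧ x ^ 2 ∈ Ioo (1 / 2) 1 := by
  have hx0 : 0 < x := (by positivity : (0:ℝ) < 1 / √2).trans hx.1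
  have h := pow_lt_pow_left₀ hx.1 (by positivity) two_ne_zero
  rw [div_pow, one_pow, sq_sqrt zero_le_two] at h
  exact ⟨hx0, h, by nlinarith [hx.2]⟩

lemma strictAntiOn_two_mul_Ec_sub_Kc :
    StrictAntiOn (fun t => 2 * Ec t - Kc t) (Ioo (1 / √2) 1) := by
  refine strictAntiOn_Ioo_of_hasDerivAt_neg
    (f' := fun x => ((1 - 2 * x ^ 2) * Ec x - (1 - x ^ 2) * Kc x) / (x * (1 - x ^ 2)))
    (fun x hx => ?_) (fun x hx => ?_)
  · obtain ⟨hx0, -, hx1⟩ := pos_and_sq_mem_Ioo_of_mem_Ioo hx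
    exact hasDerivAt_two_mul_Ec_sub_Kc hx0.ne' hx1
  · obtain ⟨hx0, hx2, hx1⟩ := pos_and_sq_mem_Ioo_of_mem_Ioo hx
    exact div_neg_of_neg_of_pos (by nlinarith [Ec_pos hx1, Kc_pos hx1]) (by nlinarith)

lemma hasDerivAt_etac_numerator {x : ℝ} (hx0 : x ≠ 0) (hx : x ^ 2 < 1) :
    HasDerivAt (fun t => t ^ 2 * Kc t - Kc t + Ec t) (x * Kc x) x := by
  refine ((((hasDerivAt_pow 2 x).mul (hasDerivAt_Kc hx0 hx)).sub (hasDerivAt_Kc hx0 hx)).add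
    (hasDerivAt_Ec hx0 hx)).congr_deriv ?_
  have : 1 - x ^ 2 ≠ 0 := by linarith
  field_simp
  ring

lemma hasDerivAt_etac {x : ℝ} (hx : 1 / 2 < x ^ 2) (hx1 : x ^ 2 < 1) :
    HasDerivAt etac (-(x * (2 * Ec x - Kc x)) / (2 * x ^ 2 - 1) ^ ((3:ℝ)/2)) x := by
  have hx0 : x ≠ 0 := by rintro rfl; norm_num at hx
  have hD : 0 < 2 * x ^ 2 - 1 := by linarith
  have hsqrt := (((hasDerivAt_pow 2 x).const_mul 2).sub_const 1).sqrt hD.ne'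
  refine ((hasDerivAt_etac_numerator hx0 hx1).div hsqrt (sqrt_pos.2 hD).ne').congr_deriv ?_
  rw [show ((3:ℝ)/2) = (1/2) * (3:ℕ) by norm_num, rpow_mul hD.le, rpow_natCast,
    ← sqrt_eq_rpow]
  have hu := sq_sqrt hD.le
  have hs := (sqrt_pos.2 hD).ne'
  set u := √(2 * x ^ 2 - 1)
  field_simp
  linear_combination x * Kc x * hu

theorem stmt_16 (qstar : ℝ) (hqs : qstar ∈ Ioo (0:ℝ) 1) (hqs0 : 2 * Ec qstar = Kc qstar) :
    StrictAntiOn etac (Ioo (1 / Real.sqrt 2) qstar) ∧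
    ∀ q ∈ Ioo (1 / Real.sqrt 2) qstar,
      HasDerivAt etac (-(q * (2 * Ec q - Kc q)) / (2*q^2 - 1) ^ ((3:ℝ)/2)) q ∧
      -(q * (2 * Ec q - Kc q)) / (2*q^2 - 1) ^ ((3:ℝ)/2) < 0 := by
  have hderiv : ∀ q ∈ Ioo (1 / √2) qstar,
      HasDerivAt etac (-(q * (2 * Ec q - Kc q)) / (2*q^2 - 1) ^ ((3:ℝ)/2)) q ∧
      -(q * (2 * Ec q - Kc q)) / (2*q^2 - 1) ^ ((3:ℝ)/2) < 0 := by
    rintro q ⟨hq, hq_lt⟩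
    have hq_mem : q ∈ Ioo (1 / √2) 1 := ⟨hq, hq_lt.trans hqs.2⟩
    obtain ⟨hq0, hq2, hq21⟩ := pos_and_sq_mem_Ioo_of_mem_Ioo hq_mem
    have hG : 0 < 2 * Ec q - Kc q := by
      have := strictAntiOn_two_mul_Ec_sub_Kc hq_mem ⟨hq.trans hq_lt, hqs.2⟩ hq_lt
      linarith
    exact ⟨hasDerivAt_etac hq2 hq21,
      div_neg_of_neg_of_pos (by nlinarith) (rpow_pos_of_pos (by linarith) _)⟩
  exact ⟨strictAntiOn_Ioo_of_hasDerivAt_neg (fun q hq => (hderiv q hq).1)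
    (fun q hq => (hderiv q hq).2), hderiv⟩
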